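/- Every well-formed MAPF instance admits a solution, i.e., an assignment of a path to each agent such that no two paths have a vertex or edge collision. -/

import Mathlib

/-- Two (space-time) paths have a vertex collision: same vertex at the same time. -/
def VCol {V : Type} (π σ : ℕ → V) : Prop := ∃ t, π t = σ t

/-- Two (space-time) paths have an edge collision: they traverse the same edge in
opposite directions at the same time. -/
def ECol {V : Type} (π σ : ℕ → V) : Prop := ∃ t, π t = σ (t + 1) ∧ π (t + 1) = σ t

/-- Two paths collide if they have a vertex collision or an edge collision. -/
def Collide {V : Type} (π σ : ℕ → V) : Prop := VCol π σ ∨ ECol π σ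

/-- `π : ℕ → V` is a path from `s` to `t` in `G`: it starts at `s`, at each time step
it stays put or moves along an edge of `G`, and it is eventually always at `t`. -/
def IsPathFun {V : Type} (G : SimpleGraph V) (s t : V) (π : ℕ → V) : Prop :=
  π 0 = s ∧ (∀ n, π (n + 1) = π n ∨ G.Adj (π n) (π (n + 1))) ∧ ∃ T, ∀ n ≥ T, π n = t

/-- The arrival time of a path at a target vertex `tgt`: the least time `T` such that
the path is at `tgt` at all times `≥ T`. -/
noncomputable def arrivalTime {V : Type} (tgt : V) (π : ℕ → V) : ℕ :=
  sInf {T | ∀ n ≥ T, π n = tgt}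

/-- A MAPF instance: a connected undirected graph and `M` agents with pairwise distinct
start vertices and pairwise distinct target vertices. -/
structure MAPF where
  V : Type
  G : SimpleGraph V
  conn : G.Connected
  M : ℕ
  s : Fin M → V
  t : Fin M → V
  s_inj : Function.Injective s
  t_inj : Function.Injective t

/-- `π` is a path for agent `i` of the MAPF instance `P`. -/
def MAPF.IsPath (P : MAPF) (i : Fin P.M) (π : ℕ → P.V) : Prop :=
  IsPathFun P.G (P.s i) (P.t i) π

/-- The arrival time of agent `i`'s path `π`. -/
noncomputable def MAPF.arr (P : MAPF) (i : Fin P.M) (π : ℕ → P.V) : ℕ :=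
  arrivalTime (P.t i) π

/-- A solution: a path for each agent such that no two paths collide. -/
def MAPF.Solution (P : MAPF) (π : Fin P.M → ℕ → P.V) : Prop :=
  (∀ i, P.IsPath i (π i)) ∧ ∀ i j, i ≠ j → ¬ Collide (π i) (π j)

/-- A priority ordering: a strict partial order (irreflexive and transitive relation)
on the agents. -/
def IsPO {M : ℕ} (r : Fin M → Fin M → Prop) : Prop :=
  (∀ i, ¬ r i i) ∧ ∀ i j k, r i j → r j k → r i k

/-- A total priority ordering: a strict total order on the agents. -/
def IsTotalPO {M : ℕ} (r : Fin M → Fin M → Prop) : Prop :=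
  IsPO r ∧ ∀ i j : Fin M, i ≠ j → r i j ∨ r j i

/-- A plan `π` is consistent with a priority ordering `r`: for every agent `i`, the
arrival time of `π i` is the minimum arrival time over all paths for agent `i` that
have no collision with `π j` for every higher-priority agent `j` (`r j i`). -/
def MAPF.Consistent (P : MAPF) (π : Fin P.M → ℕ → P.V)
    (r : Fin P.M → Fin P.M → Prop) : Prop :=
  ∀ i, IsLeast {T | ∃ σ, P.IsPath i σ ∧ (∀ j, r j i → ¬ Collide σ (π j)) ∧ P.arr i σ = T}
    (P.arr i (π i))

/-- A MAPF instance is P-solvable if it admits a solution consistent with some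
priority ordering. -/
def MAPF.PSolvable (P : MAPF) : Prop :=
  ∃ π r, IsPO r ∧ P.Solution π ∧ P.Consistent π r

/-- The flowtime of a plan: the sum of the arrival times of all agents. -/
noncomputable def MAPF.flowtime (P : MAPF) (π : Fin P.M → ℕ → P.V) : ℕ :=
  ∑ i, P.arr i (π i)

/-- The makespan of a plan: the maximum of the arrival times of all agents. -/
noncomputable def MAPF.makespan (P : MAPF) (π : Fin P.M → ℕ → P.V) : ℕ :=
  Finset.univ.sup fun i => P.arr i (π i)

/-- A MAPF instance is well-formed if every agent has a (finite) walk from its start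
vertex to its target vertex that visits neither the start vertex nor the target vertex
of any other agent. -/
def MAPF.WellFormed (P : MAPF) : Prop :=
  ∀ i, ∃ w : P.G.Walk (P.s i) (P.t i),
    ∀ j, j ≠ i → P.s j ∉ w.support ∧ P.t j ∉ w.support

/-!
Let the agents move one at a time: agent `i` waits at its start vertex until every agent of
smaller index has completed its walk, then follows its own walk to its target and stays there.
While agent `j` is moving, every agent `i < j` sits on its target and every agent `i > j` on its
start vertex, and well-formedness keeps the walk of `j` away from both; since at most one agent
moves at a time, no edge can be swapped either.
-/

theorem Collide.symm {V : Type} {π σ : ℕ → V} : Collide π σ → Collide σ π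
  | .inl ⟨t, h⟩ => .inl ⟨t, h.symm⟩
  | .inr ⟨t, h₁, h₂⟩ => .inr ⟨t, h₂.symm, h₁.symm⟩

/-- An edge collision needs both paths to move at the same time. -/
theorem not_collide_of_forall_ne {V : Type} {π σ : ℕ → V} (hne : ∀ t, π t ≠ σ t)
    (hstay : ∀ t, π (t + 1) = π t ∨ σ (t + 1) = σ t) : ¬ Collide π σ := by
  rintro (⟨t, ht⟩ | ⟨t, h₁, h₂⟩)
  · exact hne t ht
  · rcases hstay t with h | h
    · exact hne t (h.symm.trans h₂)
    · exact hne t (h₁.trans h)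

theorem Finset.sum_Iio_add_le_sum_Iio {α M : Type*} [LinearOrder α] [LocallyFiniteOrderBot α]
    [AddCommMonoid M] [PartialOrder M] [CanonicallyOrderedAdd M] (f : α → M) {i j : α}
    (hij : i < j) : ∑ k ∈ Iio i, f k + f i ≤ ∑ k ∈ Iio j, f k := by
  rw [add_comm, ← sum_cons (notMem_Iio_self (b := i)), ← Iic_eq_cons_Iio]
  exact sum_le_sum_of_subset fun k hk => mem_Iio.2 ((mem_Iic.1 hk).trans_lt hij)

namespace SimpleGraph.Walk

variable {V : Type} {G : SimpleGraph V} {u v : V}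

/-- Truncated subtraction keeps the walker at `u` up to time `τ`, and `getVert` keeps it at `v`
from time `τ + w.length` on. -/
def traverseFrom (w : G.Walk u v) (τ t : ℕ) : V :=
  w.getVert (t - τ)

variable (w : G.Walk u v) {τ t : ℕ}

theorem traverseFrom_mem_support : w.traverseFrom τ t ∈ w.support :=
  w.getVert_mem_support _

theorem traverseFrom_of_le (h : t ≤ τ) : w.traverseFrom τ t = u := by
  rw [traverseFrom, Nat.sub_eq_zero_of_le h, getVert_zero]

theorem traverseFrom_of_add_length_le (h : τ + w.length ≤ t) : w.traverseFrom τ t = v :=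
  w.getVert_of_length_le (by omega)

theorem traverseFrom_succ (h : ¬ (τ ≤ t ∧ t < τ + w.length)) :
    w.traverseFrom τ (t + 1) = w.traverseFrom τ t := by
  rcases Nat.lt_or_ge t τ with ht | ht
  · rw [w.traverseFrom_of_le ht.le, w.traverseFrom_of_le ht]
  · rw [w.traverseFrom_of_add_length_le (by omega), w.traverseFrom_of_add_length_le (by omega)]

theorem adj_traverseFrom_succ (h₁ : τ ≤ t) (h₂ : t < τ + w.length) :
    G.Adj (w.traverseFrom τ t) (w.traverseFrom τ (t + 1)) := by
  rw [traverseFrom, traverseFrom, Nat.sub_add_comm h₁]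
  exact w.adj_getVert_succ (by omega)

theorem isPathFun_traverseFrom (τ : ℕ) : IsPathFun G u v (w.traverseFrom τ) := by
  refine ⟨w.traverseFrom_of_le (Nat.zero_le τ), fun t => ?_, τ + w.length,
    fun t ht => w.traverseFrom_of_add_length_le ht⟩
  by_cases h : τ ≤ t ∧ t < τ + w.length
  · exact .inr (w.adj_traverseFrom_succ h.1 h.2)
  · exact .inl (w.traverseFrom_succ h)

/-- Until the second walk starts, it sits on `u₂`, off the first walk; once it has started, the
first walk has ended on `v₁`, off the second walk. -/
theorem not_collide_traverseFrom {u₁ v₁ u₂ v₂ : V} (w₁ : G.Walk u₁ v₁) (w₂ : G.Walk u₂ v₂)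
    {τ₁ τ₂ : ℕ} (hτ : τ₁ + w₁.length ≤ τ₂) (hu₂ : u₂ ∉ w₁.support) (hv₁ : v₁ ∉ w₂.support) :
    ¬ Collide (w₁.traverseFrom τ₁) (w₂.traverseFrom τ₂) := by
  refine not_collide_of_forall_ne (fun t => ?_) (fun t => ?_)
  · rcases Nat.lt_or_ge τ₂ t with ht | ht
    · rw [w₁.traverseFrom_of_add_length_le (by omega)]
      exact fun h => hv₁ (h ▸ w₂.traverseFrom_mem_support)
    · rw [w₂.traverseFrom_of_le ht]
      exact fun h => hu₂ (h ▸ w₁.traverseFrom_mem_support)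
  · by_cases ht : t < τ₁ + w₁.length
    · exact .inr (w₂.traverseFrom_succ (by omega))
    · exact .inl (w₁.traverseFrom_succ (by omega))

end SimpleGraph.Walk

/-- Every well-formed MAPF instance admits a solution. -/
theorem stmt4 (P : MAPF) (hwf : P.WellFormed) : ∃ π, P.Solution π := by
  choose w hw using hwf
  let τ : Fin P.M → ℕ := fun i => ∑ k ∈ Finset.Iio i, (w k).length
  have hordered : ∀ i j, i < j → ¬ Collide ((w i).traverseFrom (τ i)) ((w j).traverseFrom (τ j)) :=
    fun i j hij => (w i).not_collide_traverseFrom (w j)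
      (Finset.sum_Iio_add_le_sum_Iio _ hij) (hw i j hij.ne').1 (hw j i hij.ne).2
  refine ⟨fun i => (w i).traverseFrom (τ i), fun i => (w i).isPathFun_traverseFrom (τ i),
    fun i j hij => ?_⟩
  rcases hij.lt_or_gt with h | h
  · exact hordered i j h
  · exact fun hcol => hordered j i h hcol.symm
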